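/- arXiv:2210.04433 — 3 statements merged into one kernel-verified Lean document; each statement's English description precedes it below -/
import Mathlib

section
/- Let θ(q) be an L(@)-formula with a distinguished occurrence of a propositional variable q, and suppose that distinguished occurrence is positive in θ. Then for every model M = (W,R,V), all nominals i and j with V(i) = {w} and V(j) = {u}, and every L(@)-formula α: M,w ⊨ θ(@_jα) if and only if M,w ⊨ θ(⊥), or (M,w ⊨ θ(⊤) and M,u ⊨ α). Here θ(χ) denotes the result of substituting χ for the distinguished occurrence of q. -/
/-- Formulas of the hybrid language L(@): propositional variables and nominals
are indexed by natural numbers. -/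
inductive HForm : Type
  | prop : ℕ → HForm
  | nom : ℕ → HForm
  | bot : HForm
  | top : HForm
  | neg : HForm → HForm
  | or : HForm → HForm → HForm
  | and : HForm → HForm → HForm
  | imp : HForm → HForm → HForm
  | dia : HForm → HForm
  | box : HForm → HForm
  | at' : ℕ → HForm → HForm

/-- Satisfaction in a model `(W, R, V)`, where the valuation is split into `Vp`
(for propositional variables) and `Vn` (assigning to each nominal the unique
world in its singleton truth set). -/
def sat {W : Type} (R : W → W → Prop) (Vp : ℕ → Set W) (Vn : ℕ → W) : W → HForm → Prop
  | w, .prop p => w ∈ Vp p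
  | w, .nom i => w = Vn i
  | _, .bot => False
  | _, .top => True
  | w, .neg φ => ¬ sat R Vp Vn w φ
  | w, .or φ ψ => sat R Vp Vn w φ ∨ sat R Vp Vn w ψ
  | w, .and φ ψ => sat R Vp Vn w φ ∧ sat R Vp Vn w ψ
  | w, .imp φ ψ => sat R Vp Vn w φ → sat R Vp Vn w ψ
  | w, .dia φ => ∃ v, R w v ∧ sat R Vp Vn v φ
  | w, .box φ => ∀ v, R w v → sat R Vp Vn v φ
  | _, .at' i φ => sat R Vp Vn (Vn i) φ

/-- The inequality `φ ≤ ψ` holds in a model iff the truth set of `φ` is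
included in the truth set of `ψ`. -/
def leq {W : Type} (R : W → W → Prop) (Vp : ℕ → Set W) (Vn : ℕ → W) (φ ψ : HForm) : Prop :=
  ∀ w : W, sat R Vp Vn w φ → sat R Vp Vn w ψ

/-- One-hole contexts for L(@)-formulas: a formula with a distinguished
occurrence (the hole) of a propositional variable. -/
inductive Ctx : Type
  | hole : Ctx
  | neg : Ctx → Ctx
  | orL : Ctx → HForm → Ctx
  | orR : HForm → Ctx → Ctx
  | andL : Ctx → HForm → Ctx
  | andR : HForm → Ctx → Ctx
  | impL : Ctx → HForm → Ctx
  | impR : HForm → Ctx → Ctx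
  | dia : Ctx → Ctx
  | box : Ctx → Ctx
  | at' : ℕ → Ctx → Ctx

/-- Substituting a formula for the distinguished occurrence. -/
def Ctx.fill : Ctx → HForm → HForm
  | .hole, χ => χ
  | .neg c, χ => .neg (c.fill χ)
  | .orL c ψ, χ => .or (c.fill χ) ψ
  | .orR ψ c, χ => .or ψ (c.fill χ)
  | .andL c ψ, χ => .and (c.fill χ) ψ
  | .andR ψ c, χ => .and ψ (c.fill χ)
  | .impL c ψ, χ => .imp (c.fill χ) ψ
  | .impR ψ c, χ => .imp ψ (c.fill χ)
  | .dia c, χ => .dia (c.fill χ)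
  | .box c, χ => .box (c.fill χ)
  | .at' i c, χ => .at' i (c.fill χ)

/-- Polarity of the distinguished occurrence: `true` means positive (an even
number of polarity reversals above the hole), `false` means negative.  `¬` and
the antecedent of `→` reverse polarity; all other connectives preserve it. -/
def Ctx.polarity : Ctx → Bool
  | .hole => true
  | .neg c => !c.polarity
  | .orL c _ => c.polarity
  | .orR _ c => c.polarity
  | .andL c _ => c.polarity
  | .andR _ c => c.polarity
  | .impL c _ => !c.polarity
  | .impR _ c => c.polarity
  | .dia c => c.polarity
  | .box c => c.polarity
  | .at' _ c => c.polarity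

lemma ctx_congr {W : Type} (R : W → W → Prop) (Vp : ℕ → Set W) (Vn : ℕ → W)
    (c : Ctx) (φ ψ : HForm) (h : ∀ v, sat R Vp Vn v φ ↔ sat R Vp Vn v ψ) :
    ∀ w, sat R Vp Vn w (c.fill φ) ↔ sat R Vp Vn w (c.fill ψ) := by
  induction c with
  | hole => exact h
  | neg c ih => intro w; simp [Ctx.fill, sat, ih w]
  | orL c ψ' ih => intro w; simp [Ctx.fill, sat, ih w]
  | orR ψ' c ih => intro w; simp [Ctx.fill, sat, ih w]
  | andL c ψ' ih => intro w; simp [Ctx.fill, sat, ih w]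
  | andR ψ' c ih => intro w; simp [Ctx.fill, sat, ih w]
  | impL c ψ' ih => intro w; simp [Ctx.fill, sat, ih w]
  | impR ψ' c ih => intro w; simp [Ctx.fill, sat, ih w]
  | dia c ih => intro w; simp only [Ctx.fill, sat]; exact exists_congr fun v => and_congr_right fun _ => ih v
  | box c ih => intro w; simp only [Ctx.fill, sat]; exact forall_congr' fun v => imp_congr_right fun _ => ih v
  | at' k c ih => intro w; simpa [Ctx.fill, sat] using ih (Vn k)

lemma ctx_mono {W : Type} (R : W → W → Prop) (Vp : ℕ → Set W) (Vn : ℕ → W)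
    (c : Ctx) (φ ψ : HForm) (h : ∀ v, sat R Vp Vn v φ → sat R Vp Vn v ψ) :
    ∀ w, (c.polarity = true → sat R Vp Vn w (c.fill φ) → sat R Vp Vn w (c.fill ψ)) ∧
         (c.polarity = false → sat R Vp Vn w (c.fill ψ) → sat R Vp Vn w (c.fill φ)) := by
  induction c with
  | hole => exact fun w => ⟨fun _ => h w, fun hf => by simp [Ctx.polarity] at hf⟩
  | neg c ih =>
    intro w
    refine ⟨fun hp hs hn => ?_, fun hp hs hn => ?_⟩
    · exact hs ((ih w).2 (by simpa [Ctx.polarity] using hp) hn)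
    · exact hs ((ih w).1 (by simpa [Ctx.polarity] using hp) hn)
  | orL c ψ' ih =>
    intro w
    exact ⟨fun hp => Or.imp ((ih w).1 hp) id, fun hp => Or.imp ((ih w).2 hp) id⟩
  | orR ψ' c ih =>
    intro w
    exact ⟨fun hp => Or.imp id ((ih w).1 hp), fun hp => Or.imp id ((ih w).2 hp)⟩
  | andL c ψ' ih =>
    intro w
    exact ⟨fun hp => And.imp ((ih w).1 hp) id, fun hp => And.imp ((ih w).2 hp) id⟩
  | andR ψ' c ih =>
    intro w
    exact ⟨fun hp => And.imp id ((ih w).1 hp), fun hp => And.imp id ((ih w).2 hp)⟩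
  | impL c ψ' ih =>
    intro w
    refine ⟨fun hp hs ha => ?_, fun hp hs ha => ?_⟩
    · exact hs ((ih w).2 (by simpa [Ctx.polarity] using hp) ha)
    · exact hs ((ih w).1 (by simpa [Ctx.polarity] using hp) ha)
  | impR ψ' c ih =>
    intro w
    exact ⟨fun hp hs ha => (ih w).1 hp (hs ha), fun hp hs ha => (ih w).2 hp (hs ha)⟩
  | dia c ih =>
    intro w
    exact ⟨fun hp ⟨v, hv, hs⟩ => ⟨v, hv, (ih v).1 hp hs⟩,
           fun hp ⟨v, hv, hs⟩ => ⟨v, hv, (ih v).2 hp hs⟩⟩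
  | box c ih =>
    intro w
    exact ⟨fun hp hs v hv => (ih v).1 hp (hs v hv),
           fun hp hs v hv => (ih v).2 hp (hs v hv)⟩
  | at' k c ih =>
    intro w
    exact ⟨fun hp => (ih (Vn k)).1 hp, fun hp => (ih (Vn k)).2 hp⟩

/-- Let θ(q) be an L(@)-formula with a distinguished, positive occurrence of a
propositional variable q (represented by the one-hole context θ).  For every
model, nominals i, j with V(i) = {w} and V(j) = {u}, and formula α:
M,w ⊨ θ(@_j α) iff M,w ⊨ θ(⊥) or (M,w ⊨ θ(⊤) and M,u ⊨ α). -/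
theorem positive_at_decomposition {W : Type} (hW : Nonempty W)
    (R : W → W → Prop) (Vp : ℕ → Set W) (Vn : ℕ → W)
    (θ : Ctx) (hpos : θ.polarity = true)
    (i j : ℕ) (w u : W) (hi : Vn i = w) (hj : Vn j = u) (α : HForm) :
    sat R Vp Vn w (θ.fill (.at' j α)) ↔
      sat R Vp Vn w (θ.fill .bot) ∨ (sat R Vp Vn w (θ.fill .top) ∧ sat R Vp Vn u α) := by
  by_cases hα : sat R Vp Vn u α
  · have heq := ctx_congr R Vp Vn θ (.at' j α) .top
      (fun v => by simp [sat, hj, hα]) w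
    have hmono := (ctx_mono R Vp Vn θ .bot .top (fun v h => by simp [sat]) w).1 hpos
    constructor
    · intro h; exact Or.inr ⟨heq.mp h, hα⟩
    · rintro (h | ⟨h, _⟩)
      · exact heq.mpr (hmono h)
      · exact heq.mpr h
  · have heq := ctx_congr R Vp Vn θ (.at' j α) .bot
      (fun v => by simp [sat, hj, hα]) w
    constructor
    · intro h; exact Or.inl (heq.mp h)
    · rintro (h | ⟨_, h⟩)
      · exact heq.mpr h
      · exact absurd h hα
end

section
/- Let θ(q) be an L(@)-formula with a distinguished occurrence of a propositional variable q, and suppose that distinguished occurrence is negative in θ. Then for every model M = (W,R,V), all nominals i and j with V(i) = {w} and V(j) = {u}, and every L(@)-formula α: M,w ⊨ θ(@_jα) if and only if M,w ⊨ θ(⊤), or (M,w ⊨ θ(⊥) and M,u ⊭ α). Here θ(χ) denotes the result of substituting χ for the distinguished occurrence of q. -/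
/-- Semantic congruence: filling a context with equivalent formulas yields
equivalent formulas. -/
theorem fill_congr {W : Type} (R : W → W → Prop) (Vp : ℕ → Set W) (Vn : ℕ → W)
    (c : Ctx) (χ χ' : HForm) (h : ∀ v, sat R Vp Vn v χ ↔ sat R Vp Vn v χ') :
    ∀ v, sat R Vp Vn v (c.fill χ) ↔ sat R Vp Vn v (c.fill χ') := by
  induction c with
  | hole => exact h
  | neg c ih => intro v; simp only [Ctx.fill, sat]; rw [ih v]
  | orL c ψ ih => intro v; simp only [Ctx.fill, sat]; rw [ih v]
  | orR ψ c ih => intro v; simp only [Ctx.fill, sat]; rw [ih v]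
  | andL c ψ ih => intro v; simp only [Ctx.fill, sat]; rw [ih v]
  | andR ψ c ih => intro v; simp only [Ctx.fill, sat]; rw [ih v]
  | impL c ψ ih => intro v; simp only [Ctx.fill, sat]; rw [ih v]
  | impR ψ c ih => intro v; simp only [Ctx.fill, sat]; rw [ih v]
  | dia c ih =>
      intro v; simp only [Ctx.fill, sat]
      exact exists_congr fun x => and_congr_right fun _ => ih x
  | box c ih =>
      intro v; simp only [Ctx.fill, sat]
      exact forall_congr' fun x => imp_congr_right fun _ => ih x
  | at' n c ih => intro v; simp only [Ctx.fill, sat]; exact ih _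

/-- Monotonicity/antitonicity of contexts with respect to the hole. -/
theorem fill_mono {W : Type} (R : W → W → Prop) (Vp : ℕ → Set W) (Vn : ℕ → W)
    (c : Ctx) (χ χ' : HForm) (h : leq R Vp Vn χ χ') :
    (c.polarity = true → leq R Vp Vn (c.fill χ) (c.fill χ')) ∧
    (c.polarity = false → leq R Vp Vn (c.fill χ') (c.fill χ)) := by
  induction c with
  | hole => exact ⟨fun _ => h, fun hp => by simp [Ctx.polarity] at hp⟩
  | neg c ih =>
      refine ⟨fun hp v hv hv' => ?_, fun hp v hv hv' => ?_⟩
      · simp only [Ctx.polarity, Bool.not_eq_true'] at hp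
        exact hv (ih.2 hp v hv')
      · simp only [Ctx.polarity, Bool.not_eq_false'] at hp
        exact hv (ih.1 hp v hv')
  | orL c ψ ih =>
      exact ⟨fun hp v hv => hv.imp (ih.1 hp v) id, fun hp v hv => hv.imp (ih.2 hp v) id⟩
  | orR ψ c ih =>
      exact ⟨fun hp v hv => hv.imp id (ih.1 hp v), fun hp v hv => hv.imp id (ih.2 hp v)⟩
  | andL c ψ ih =>
      exact ⟨fun hp v hv => ⟨ih.1 hp v hv.1, hv.2⟩, fun hp v hv => ⟨ih.2 hp v hv.1, hv.2⟩⟩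
  | andR ψ c ih =>
      exact ⟨fun hp v hv => ⟨hv.1, ih.1 hp v hv.2⟩, fun hp v hv => ⟨hv.1, ih.2 hp v hv.2⟩⟩
  | impL c ψ ih =>
      refine ⟨fun hp v hv ha => ?_, fun hp v hv ha => ?_⟩
      · simp only [Ctx.polarity, Bool.not_eq_true'] at hp
        exact hv (ih.2 hp v ha)
      · simp only [Ctx.polarity, Bool.not_eq_false'] at hp
        exact hv (ih.1 hp v ha)
  | impR ψ c ih =>
      exact ⟨fun hp v hv ha => ih.1 hp v (hv ha), fun hp v hv ha => ih.2 hp v (hv ha)⟩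
  | dia c ih =>
      exact ⟨fun hp v ⟨x, hx, hs⟩ => ⟨x, hx, ih.1 hp x hs⟩,
             fun hp v ⟨x, hx, hs⟩ => ⟨x, hx, ih.2 hp x hs⟩⟩
  | box c ih =>
      exact ⟨fun hp v hv x hx => ih.1 hp x (hv x hx),
             fun hp v hv x hx => ih.2 hp x (hv x hx)⟩
  | at' n c ih =>
      exact ⟨fun hp v hv => ih.1 hp _ hv, fun hp v hv => ih.2 hp _ hv⟩

/-- Let θ(q) be an L(@)-formula with a distinguished, negative occurrence of a
propositional variable q (represented by the one-hole context θ).  For every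
model, nominals i, j with V(i) = {w} and V(j) = {u}, and formula α:
M,w ⊨ θ(@_j α) iff M,w ⊨ θ(⊤) or (M,w ⊨ θ(⊥) and M,u ⊭ α). -/
theorem negative_at_decomposition {W : Type} (hW : Nonempty W)
    (R : W → W → Prop) (Vp : ℕ → Set W) (Vn : ℕ → W)
    (θ : Ctx) (hneg : θ.polarity = false)
    (i j : ℕ) (w u : W) (hi : Vn i = w) (hj : Vn j = u) (α : HForm) :
    sat R Vp Vn w (θ.fill (.at' j α)) ↔
      sat R Vp Vn w (θ.fill .top) ∨ (sat R Vp Vn w (θ.fill .bot) ∧ ¬ sat R Vp Vn u α) := by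
  by_cases hα : sat R Vp Vn u α
  · have hequiv : ∀ v, sat R Vp Vn v (HForm.at' j α) ↔ sat R Vp Vn v HForm.top := by
      intro v; simp only [sat, hj]; exact ⟨fun _ => trivial, fun _ => hα⟩
    rw [fill_congr R Vp Vn θ _ _ hequiv w]
    constructor
    · exact Or.inl
    · rintro (h | ⟨hb, hna⟩)
      · exact h
      · exact absurd hα hna
  · have hequiv : ∀ v, sat R Vp Vn v (HForm.at' j α) ↔ sat R Vp Vn v HForm.bot := by
      intro v; simp only [sat, hj]; exact ⟨fun h => hα h, False.elim⟩
    rw [fill_congr R Vp Vn θ _ _ hequiv w]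
    constructor
    · exact fun h => Or.inr ⟨h, hα⟩
    · rintro (h | ⟨hb, _⟩)
      · exact (fill_mono R Vp Vn θ HForm.bot HForm.top (fun v hv => trivial)).2 hneg w h
      · exact hb
end

section
/- For every frame F = (W,R), the McKinsey-like hybrid formula □◇@_i◇p → ◇□p (where i is a nominal and p a propositional variable) is valid on F if and only if both of the following first-order conditions hold: (A) for all w₀, w₁, u, v ∈ W, if every R-successor of w₀ has an R-successor, and R u v, and for every z with R w₁ z there exists y with R z y and y ≠ v, then w₀ ≠ w₁; and (B) for all w₀, w₁ ∈ W, if w₀ has no R-successor and every R-successor of w₁ has an R-successor, then w₀ ≠ w₁. -/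
/-- First-order correspondence of the McKinsey-like hybrid formula
□◇@_i◇p → ◇□p: it is valid on a frame (W,R) iff the two first-order
conditions (A) and (B) hold. -/
theorem mckinsey_like_correspondence {W : Type} (hW : Nonempty W) (R : W → W → Prop)
    (i p : ℕ) :
    (∀ (Vp : ℕ → Set W) (Vn : ℕ → W) (w : W),
        sat R Vp Vn w (.imp (.box (.dia (.at' i (.dia (.prop p))))) (.dia (.box (.prop p))))) ↔
    ((∀ w₀ w₁ u v : W,
        (∀ z, R w₀ z → ∃ y, R z y) →
        R u v →
        (∀ z, R w₁ z → ∃ y, R z y ∧ y ≠ v) →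
        w₀ ≠ w₁) ∧
     (∀ w₀ w₁ : W,
        (¬ ∃ z, R w₀ z) →
        (∀ z, R w₁ z → ∃ y, R z y) →
        w₀ ≠ w₁)) := by
  constructor
  · intro hval
    constructor
    · intro w₀ w₁ u v h0 huv h1 heq
      subst heq
      have h := hval (fun _ => {v}) (fun _ => u) w₀
      simp only [sat, Set.mem_singleton_iff] at h
      obtain ⟨z, hz, hzv⟩ := h (fun z hz => by
        obtain ⟨y, hy⟩ := h0 z hz
        exact ⟨y, hy, v, huv, rfl⟩)
      obtain ⟨y, hy, hne⟩ := h1 z hz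
      exact hne (hzv y hy)
    · intro w₀ w₁ h0 h1 heq
      subst heq
      have h := hval (fun _ => ∅) (fun _ => Classical.choice hW) w₀
      simp only [sat, Set.mem_empty_iff_false] at h
      obtain ⟨z, hz, _⟩ := h (fun z hz => absurd ⟨z, hz⟩ h0)
      exact h0 ⟨z, hz⟩
  · rintro ⟨hA, hB⟩ Vp Vn w
    simp only [sat]
    intro hant
    -- w has a successor
    have hsucc : ∃ z, R w z := by
      by_contra hno
      exact hB w w hno (fun z hz => (hant z hz).imp fun y hy => hy.1) rfl
    obtain ⟨z₀, hz₀⟩ := hsucc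
    obtain ⟨_, _, v, huv, hv⟩ := hant z₀ hz₀
    by_contra hcon
    refine hA w w (Vn i) v (fun z hz => (hant z hz).imp fun y hy => hy.1) huv
      (fun z hz => ?_) rfl
    by_contra hno
    push_neg at hno
    exact hcon ⟨z, hz, fun y hy => (hno y hy) ▸ hv⟩
end
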